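/- arXiv:2312.11936 — 2 statements merged into one kernel-verified Lean document; each statement's English description precedes it below -/
import Mathlib

section
/- Every answer set of a normal program P, viewed as a truth assignment over at(P), satisfies Clark's completion Comp(P). -/
open Classical

universe u

/-- A normal logic program rule `head ← pos, ∼neg`. -/
structure Rule (α : Type u) where
  head : α
  pos : Set α
  neg : Set α

/-- The atoms occurring in a program. -/
def progAtoms {α : Type u} (P : Set (Rule α)) : Set α :=
  ⋃ r ∈ P, ({r.head} ∪ r.pos ∪ r.neg)

/-- `M` satisfies rule `r`. -/
def satRule {α : Type u} (M : Set α) (r : Rule α) : Prop :=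
  (r.pos ⊆ M ∧ r.neg ∩ M = ∅) → r.head ∈ M

/-- `M` satisfies program `P`. -/
def satProg {α : Type u} (M : Set α) (P : Set (Rule α)) : Prop := ∀ r ∈ P, satRule M r

/-- The Gelfond–Lifschitz reduct `P^M`. -/
def reduct {α : Type u} (P : Set (Rule α)) (M : Set α) : Set (Rule α) :=
  {r' | ∃ r ∈ P, r.neg ∩ M = ∅ ∧ r' = (⟨r.head, r.pos, (∅ : Set α)⟩ : Rule α)}

/-- `M` is an answer set of `P`: a ⊆-minimal model of the reduct `P^M`. -/
def isAnswerSet {α : Type u} (P : Set (Rule α)) (M : Set α) : Prop :=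
  M ⊆ progAtoms P ∧ satProg M (reduct P M) ∧ ∀ N, N ⊂ M → ¬ satProg N (reduct P M)

/-- `τ` satisfies the body of rule `r`. -/
def bodySat {α : Type u} (τ : α → Prop) (r : Rule α) : Prop :=
  (∀ b ∈ r.pos, τ b) ∧ (∀ c ∈ r.neg, ¬ τ c)

/-- `τ` satisfies Clark's completion of `P`. -/
def compSat {α : Type u} (τ : α → Prop) (P : Set (Rule α)) : Prop :=
  ∀ a ∈ progAtoms P, (τ a ↔ ∃ r ∈ P, r.head = a ∧ bodySat τ r)

/-- Edge of the positive dependency graph: from head to a positive body atom. -/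
def depEdge {α : Type u} (P : Set (Rule α)) (b a : α) : Prop :=
  ∃ r ∈ P, r.head = b ∧ a ∈ r.pos

/-- `L` is a loop of `P`: nonempty, and any two atoms are connected through `L`. -/
def isLoop {α : Type u} (P : Set (Rule α)) (L : Set α) : Prop :=
  L.Nonempty ∧ L ⊆ progAtoms P ∧
    ∀ x ∈ L, ∀ y ∈ L, Relation.TransGen (fun u v => depEdge P u v ∧ u ∈ L ∧ v ∈ L) x y

/-- `r` is an external support of loop `L`. -/
def isExternalSupport {α : Type u} (P : Set (Rule α)) (L : Set α) (r : Rule α) : Prop :=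
  r ∈ P ∧ r.head ∈ L ∧ r.pos ∩ L = ∅

/-- `τ` satisfies the loop formula `LF(L,P)`. -/
def loopFormulaSat {α : Type u} (τ : α → Prop) (P : Set (Rule α)) (L : Set α) : Prop :=
  (∀ a ∈ L, τ a) → ∃ r, isExternalSupport P L r ∧ bodySat τ r

/-- `P` is tight: no loops. -/
def isTight {α : Type u} (P : Set (Rule α)) : Prop := ∀ L, ¬ isLoop P L

/-- The loop atoms of `P`. -/
def loopAtoms {α : Type u} (P : Set (Rule α)) : Set α := {a | ∃ L, isLoop P L ∧ a ∈ L}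

/-- Literals over variables `V`: a variable with a polarity. -/
abbrev Lit (V : Type u) := V × Bool

/-- Negation of a literal. -/
def negLit {V : Type u} (ℓ : Lit V) : Lit V := (ℓ.1, !ℓ.2)

/-- A clause is a set of literals. -/
abbrev Clause (V : Type u) := Set (Lit V)

/-- A CNF formula is a set of clauses. -/
abbrev CNF (V : Type u) := Set (Clause V)

/-- Variables occurring in a CNF formula. -/
def cnfVars {V : Type u} (φ : CNF V) : Set V := {v | ∃ C ∈ φ, ∃ b, ((v, b) : Lit V) ∈ C}

/-- `τ` satisfies the CNF `φ`. -/
def satCNF {V : Type u} (τ : V → Bool) (φ : CNF V) : Prop :=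
  ∀ C ∈ φ, ∃ ℓ ∈ C, τ ℓ.1 = ℓ.2

/-- Literals derivable by unit propagation from the assignment-literals `A` on `φ`. -/
inductive Implied {V : Type u} (φ : CNF V) (A : Set (Lit V)) : Lit V → Prop
  | base {ℓ : Lit V} : ℓ ∈ A → Implied φ A ℓ
  | unit {C : Clause V} {ℓ : Lit V} : C ∈ φ → ℓ ∈ C →
      (∀ ℓ' ∈ C, ℓ' ≠ ℓ → Implied φ A (negLit ℓ')) → Implied φ A ℓ

/-- The upResidual `φ|_A` of unit propagation: clauses containing a literal assigned
true by `A` are removed, and literals whose negation is derived are deleted. -/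
def upResidual {V : Type u} (φ : CNF V) (A : Set (Lit V)) : CNF V :=
  {C' | ∃ C ∈ φ, (∀ ℓ ∈ C, ℓ ∉ A) ∧ C' = {ℓ ∈ C | ¬ Implied φ A (negLit ℓ)}}

/-- The upResidual consists only of unit clauses on copy variables (the paper's
reading of `Copy(P)|_τ = ∅`). -/
def copyUnitsOnly {V : Type u} (CV : Set V) (φ : CNF V) : Prop :=
  ∀ C ∈ φ, ∃ v ∈ CV, ∃ b : Bool, C = ({(v, b)} : Clause V)

/-- The literals made true by assignment `τ` restricted to domain `X`. -/
def assignLits {V : Type u} (X : Set V) (τ : V → Bool) : Set (Lit V) :=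
  {ℓ | ℓ.1 ∈ X ∧ τ ℓ.1 = ℓ.2}

/-- Extend an assignment on a subtype to the whole variable type (false outside). -/
noncomputable def extAssign {V : Type u} (X : Set V) (σ : X → Bool) : V → Bool :=
  fun v => if h : v ∈ X then σ ⟨v, h⟩ else false

/-- The answer-set count `N(F,G)` over domain `X`, with copy variables `CV`:
the number of assignments of `X` satisfying `F` and propagating `G` away. -/
noncomputable def countAS {V : Type u} (CV : Set V) (X : Set V) (F G : CNF V) : ℕ :=
  Nat.card {σ : X → Bool //
    satCNF (extAssign X σ) F ∧
    copyUnitsOnly CV (upResidual G (assignLits X (extAssign X σ)))}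

/-- The clause `body(r) → head(r)` over variables `α ⊕ α` (atoms are `inl`). -/
def ruleClause {α : Type u} (r : Rule α) : Clause (α ⊕ α) :=
  insert ((Sum.inl r.head : α ⊕ α), true)
    ({ℓ | ∃ b ∈ r.pos, ℓ = ((Sum.inl b : α ⊕ α), false)} ∪
     {ℓ | ∃ c ∈ r.neg, ℓ = ((Sum.inl c : α ⊕ α), true)})

/-- The literals of the body of `r`, as literals over `α ⊕ α`. -/
def bodyLits {α : Type u} (r : Rule α) : Set (Lit (α ⊕ α)) :=
  {ℓ | ∃ b ∈ r.pos, ℓ = ((Sum.inl b : α ⊕ α), true)} ∪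
  {ℓ | ∃ c ∈ r.neg, ℓ = ((Sum.inl c : α ⊕ α), false)}

/-- Clark's completion of `P` in clausal form: a clause per rule for
`body(r) → head(r)`, and for each atom `a` the clausal expansion of
`a → ⋁ {body(r) | head(r) = a}` via literal choice functions. -/
def compCNF {α : Type u} (P : Set (Rule α)) : CNF (α ⊕ α) :=
  {C | ∃ r ∈ P, C = ruleClause r} ∪
  {C | ∃ a ∈ progAtoms P, ∃ f : Rule α → Lit (α ⊕ α),
        (∀ r ∈ P, r.head = a → f r ∈ bodyLits r) ∧
        C = insert ((Sum.inl a : α ⊕ α), false) {ℓ | ∃ r ∈ P, r.head = a ∧ ℓ = f r}}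

/-- The copy operation `Copy(P)`: type-1 clauses `v′ → v` for loop atoms `v`
(copies are `inr`), and type-2 clauses for rules with a loop-atom head, with
positive loop atoms replaced by their copies. -/
def copyCNF {α : Type u} (P : Set (Rule α)) : CNF (α ⊕ α) :=
  {C | ∃ v ∈ loopAtoms P,
        C = ({((Sum.inr v : α ⊕ α), false), ((Sum.inl v : α ⊕ α), true)} : Clause (α ⊕ α))} ∪
  {C | ∃ r ∈ P, r.head ∈ loopAtoms P ∧
        C = insert ((Sum.inr r.head : α ⊕ α), true)
          ({ℓ | ∃ a ∈ r.pos, a ∈ loopAtoms P ∧ ℓ = ((Sum.inr a : α ⊕ α), false)} ∪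
           {ℓ | ∃ b ∈ r.pos, b ∉ loopAtoms P ∧ ℓ = ((Sum.inl b : α ⊕ α), false)} ∪
           {ℓ | ∃ c ∈ r.neg, ℓ = ((Sum.inl c : α ⊕ α), true)})}

/-- The assignment-literals of `τ : α → Bool` on atom domain `X`, over `α ⊕ α`. -/
def atomLits {α : Type u} (X : Set α) (τ : α → Bool) : Set (Lit (α ⊕ α)) :=
  {ℓ | ∃ a ∈ X, ℓ = ((Sum.inl a : α ⊕ α), τ a)}

/-- The copy variables of `α ⊕ α`. -/
def copyVars (α : Type u) : Set (α ⊕ α) := Set.range Sum.inr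

/-! The model half of the completion holds because `M` is a model of `P^M`, hence of `P`:
a rule whose body `M` satisfies survives the reduct with the same positive body.
The support half comes from minimality: if no rule with head `a` had its body satisfied
by `M`, then `M \ {a}` would still be a model of `P^M`. -/

section AnswerSet

variable {α : Type u} {P : Set (Rule α)} {M : Set α}

theorem bodySat_mem_iff (r : Rule α) :
    bodySat (· ∈ M) r ↔ r.pos ⊆ M ∧ r.neg ∩ M = ∅ := by
  simp only [bodySat, Set.subset_def, Set.eq_empty_iff_forall_notMem, Set.mem_inter_iff,
    not_and]

theorem mem_reduct_of_neg_disjoint {r : Rule α} (hr : r ∈ P) (hneg : r.neg ∩ M = ∅) :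
    (⟨r.head, r.pos, ∅⟩ : Rule α) ∈ reduct P M :=
  ⟨r, hr, hneg, rfl⟩

theorem satProg_of_satProg_reduct (hM : satProg M (reduct P M)) : satProg M P :=
  fun _ hr ⟨hpos, hneg⟩ =>
    hM ⟨_, _, ∅⟩ (mem_reduct_of_neg_disjoint hr hneg) ⟨hpos, Set.empty_inter M⟩

theorem satProg_reduct_diff_singleton (hM : satProg M (reduct P M)) {a : α}
    (hunsupp : ∀ r ∈ P, r.head = a → ¬ bodySat (· ∈ M) r) :
    satProg (M \ {a}) (reduct P M) := by
  rintro _ ⟨r, hr, hneg, rfl⟩ ⟨hpos, -⟩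
  have hposM : r.pos ⊆ M := hpos.trans Set.sdiff_subset
  refine ⟨hM _ (mem_reduct_of_neg_disjoint hr hneg) ⟨hposM, Set.empty_inter M⟩, fun hhead => ?_⟩
  exact hunsupp r hr hhead ((bodySat_mem_iff r).mpr ⟨hposM, hneg⟩)

theorem exists_supporting_rule (hM : satProg M (reduct P M))
    (hmin : ∀ N, N ⊂ M → ¬ satProg N (reduct P M)) {a : α} (ha : a ∈ M) :
    ∃ r ∈ P, r.head = a ∧ bodySat (· ∈ M) r := by
  by_contra! hunsupp
  exact hmin (M \ {a}) (Set.sdiff_singleton_ssubset.mpr ha)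
    (satProg_reduct_diff_singleton hM hunsupp)

end AnswerSet

/-- Every answer set of a normal program `P` satisfies Clark's completion. -/
theorem answer_set_satisfies_completion {α : Type u}
    (P : Set (Rule α)) (M : Set α) (h : isAnswerSet P M) :
    compSat (fun a => a ∈ M) P := by
  obtain ⟨-, hM, hmin⟩ := h
  intro a _
  refine ⟨exists_supporting_rule hM hmin, ?_⟩
  rintro ⟨r, hr, rfl, hbody⟩
  exact satProg_of_satProg_reduct hM r hr ((bodySat_mem_iff r).mp hbody)
end

section
/- In any loop L of a normal program P that is contained in an answer set M, there exists a rule r with head(r) ∈ L, body⁺(r) ∩ L = ∅, and M ⊨ body(r); i.e., every loop contained in an answer set has an external support whose body is satisfied by the answer set. -/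
open Classical

universe u

/-! If no external support of `L` has its body satisfied by `M`, then `M \ L` is still a model of
the reduct `P^M`: a reduct rule whose body holds in `M \ L` has no positive body atom in `L`, so
its head cannot lie in `L`. Since `L` is nonempty and contained in `M`, this contradicts the
minimality of the answer set `M`. -/

theorem satProg_diff_reduct_of_not_bodySat_externalSupport {α : Type u} {P : Set (Rule α)} {M L : Set α}
    (hsat : satProg M (reduct P M))
    (hno : ∀ r, isExternalSupport P L r → ¬ bodySat (· ∈ M) r) :
    satProg (M \ L) (reduct P M) := by
  rintro _ ⟨r, hrP, hneg, rfl⟩ ⟨hpos, -⟩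
  obtain ⟨hposM, hposL⟩ := Set.subset_sdiff.mp hpos
  have hhead : r.head ∈ M := hsat ⟨r.head, r.pos, ∅⟩ ⟨r, hrP, hneg, rfl⟩ ⟨hposM, Set.empty_inter M⟩
  refine ⟨hhead, fun hheadL => hno r ⟨hrP, hheadL, ?_⟩ ⟨hposM, ?_⟩⟩
  · exact Set.disjoint_iff_inter_eq_empty.mp hposL
  · exact fun c hc hcM => Set.eq_empty_iff_forall_notMem.mp hneg c ⟨hc, hcM⟩

/-- Every loop contained in an answer set has an external support whose body is
satisfied by the answer set (answer sets satisfy all loop formulas). -/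
theorem loop_in_answer_set_has_external_support {α : Type u}
    (P : Set (Rule α)) (M L : Set α)
    (hM : isAnswerSet P M) (hL : isLoop P L) (hLM : L ⊆ M) :
    ∃ r, isExternalSupport P L r ∧ bodySat (fun a => a ∈ M) r := by
  by_contra! hno
  obtain ⟨-, hsat, hmin⟩ := hM
  exact hmin (M \ L) (LE.le.sdiff_ssubset_of_nonempty hLM hL.1)
    (satProg_diff_reduct_of_not_bodySat_externalSupport hsat hno)
end
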